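/- arXiv:1404.3955 — 3 statements merged into one kernel-verified Lean document; each statement's English description precedes it below -/
import Mathlib

section
/- Let M be a symmetric n×n matrix over ℚ of rank r, and suppose the top-left r×r submatrix M' of M is invertible. Then there exists a unique n×r matrix R over ℚ whose top r×r block is the identity matrix and which satisfies M = R * M' * Rᵀ. -/
open Matrix

/-- The top-left `r × r` submatrix of an `n × n` matrix. -/
def topLeft {n r : ℕ} (hrn : r ≤ n) (M : Matrix (Fin n) (Fin n) ℚ) :
    Matrix (Fin r) (Fin r) ℚ :=
  M.submatrix (Fin.castLE hrn) (Fin.castLE hrn)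

/-- The top `r × r` block of an `n × r` matrix. -/
def topBlock {n r : ℕ} (hrn : r ≤ n) (R : Matrix (Fin n) (Fin r) ℚ) :
    Matrix (Fin r) (Fin r) ℚ :=
  R.submatrix (Fin.castLE hrn) id

/-!
The `r` columns `A` of `M` through the invertible block `M'` already have rank `r = rank M`,
so they span the column space of `M` and `M = A * C`. Reading off the top `r` rows gives
`M' * C = Aᵀ` (by symmetry), hence `M = A * M'⁻¹ * Aᵀ = R * M' * Rᵀ` for `R = A * M'⁻¹`.
Conversely, the first `r` columns of `M = R * M' * Rᵀ` are `R * M'` when the top block of `R`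
is `1`, which forces `R = A * M'⁻¹`.
-/

namespace Matrix

section

variable {m n k R : Type*} [CommSemiring R] [Fintype k]

theorem submatrix_mul_rows {l : Type*} (A : Matrix m k R) (B : Matrix k n R) (f : l → m) :
    (A * B).submatrix f id = A.submatrix f id * B := by
  simpa using submatrix_mul A B f id id Function.bijective_id

theorem submatrix_mul_cols {l : Type*} (A : Matrix m k R) (B : Matrix k n R) (g : l → n) :
    (A * B).submatrix id g = A * B.submatrix id g := by
  simpa using submatrix_mul A B id id g Function.bijective_id

variable [Fintype n]

theorem exists_eq_mul_of_range_mulVecLin_le {A : Matrix m k R} {B : Matrix m n R}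
    (h : LinearMap.range B.mulVecLin ≤ LinearMap.range A.mulVecLin) :
    ∃ C : Matrix k n R, B = A * C := by
  have hcol (j : n) : ∃ c, A *ᵥ c = B.col j :=
    h (by rw [range_mulVecLin]; exact Submodule.subset_span ⟨j, rfl⟩)
  choose c hc using hcol
  exact ⟨(of c)ᵀ, ext fun i j => (congrFun (hc j) i).symm⟩

theorem range_mulVecLin_submatrix_id_le (M : Matrix m n R) (g : k → n) :
    LinearMap.range (M.submatrix id g).mulVecLin ≤ LinearMap.range M.mulVecLin := by
  rw [range_mulVecLin, range_mulVecLin]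
  exact Submodule.span_mono (Set.range_subset_iff.mpr fun j => ⟨g j, rfl⟩)

end

theorem eq_submatrix_mul_inv_mul_of_rank_eq {m n r K : Type*} [Field K] [Fintype m] [Fintype n]
    [Fintype r] [DecidableEq r] (M : Matrix m n K) (f : r → m) (g : r → n)
    (hM' : IsUnit (M.submatrix f g)) (hrank : M.rank = Fintype.card r) :
    M = M.submatrix id g * (M.submatrix f g)⁻¹ * M.submatrix f id := by
  set A := M.submatrix id g
  have hA : LinearMap.range A.mulVecLin = LinearMap.range M.mulVecLin := by
    refine Submodule.eq_of_le_of_finrank_le (range_mulVecLin_submatrix_id_le M g) ?_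
    change M.rank ≤ A.rank
    calc M.rank = (M.submatrix f g).rank := by rw [rank_of_isUnit _ hM', hrank]
      _ ≤ A.rank := rank_submatrix_le A f id
  obtain ⟨C, hC⟩ := exists_eq_mul_of_range_mulVecLin_le hA.ge
  have hrows : M.submatrix f id = M.submatrix f g * C := by
    conv_lhs => rw [hC]
    exact submatrix_mul_rows A C f
  have hdet : IsUnit (M.submatrix f g).det := (isUnit_iff_isUnit_det _).mp hM'
  rw [Matrix.mul_assoc, hrows, nonsing_inv_mul_cancel_left _ _ hdet]
  exact hC

end Matrix

theorem unique_R {n r : ℕ} (hrn : r ≤ n) (M : Matrix (Fin n) (Fin n) ℚ)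
    (hsym : M.IsSymm) (hrank : M.rank = r)
    (hM' : IsUnit (topLeft hrn M)) :
    ∃! R : Matrix (Fin n) (Fin r) ℚ,
      topBlock hrn R = 1 ∧ M = R * topLeft hrn M * Rᵀ := by
  set M' := topLeft hrn M
  set A := M.submatrix id (Fin.castLE hrn)
  have hdet : IsUnit M'.det := (isUnit_iff_isUnit_det _).mp hM'
  have hAt : Aᵀ = M.submatrix (Fin.castLE hrn) id := by
    rw [transpose_submatrix, hsym.eq]
  have hM'sym : M'.IsSymm := hsym.submatrix (Fin.castLE hrn)
  have hM'inv : (M'⁻¹)ᵀ = M'⁻¹ := by rw [transpose_nonsing_inv, hM'sym.eq]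
  refine ⟨A * M'⁻¹, ⟨?_, ?_⟩, ?_⟩
  · rw [topBlock, submatrix_mul_rows]
    exact mul_nonsing_inv _ hdet
  · rw [transpose_mul, hM'inv, hAt, nonsing_inv_mul_cancel_right _ _ hdet,
      ← Matrix.mul_assoc]
    exact M.eq_submatrix_mul_inv_mul_of_rank_eq _ _ hM' (by rw [hrank, Fintype.card_fin])
  · rintro R ⟨hR, hRM⟩
    have hA : A = R * M' := by
      calc A = (R * M' * Rᵀ).submatrix id (Fin.castLE hrn) := by rw [← hRM]
        _ = R * M' * (topBlock hrn R)ᵀ := by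
          rw [submatrix_mul_cols, topBlock, transpose_submatrix]
        _ = R * M' := by rw [hR, transpose_one, Matrix.mul_one]
    rw [hA, mul_nonsing_inv_cancel_right _ _ hdet]
end

section
/- Let M be a symmetric n×n matrix over ℚ of rank r whose top-left r×r submatrix M' is invertible, and set R := N * M'⁻¹, where N is the n×r matrix consisting of the first r columns of M. If A is any n×m matrix over ℚ with M = A * Aᵀ, and A' denotes the r×m matrix consisting of the first r rows of A, then M' = A' * A'ᵀ and A = R * A'. In particular, any matrix A with M = A * Aᵀ is uniquely determined by its first r rows. -/
open Matrix

/-- The `n × r` submatrix on the first `r` columns of an `n × n` matrix. -/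
def firstCols {n r : ℕ} (hrn : r ≤ n) (M : Matrix (Fin n) (Fin n) ℚ) :
    Matrix (Fin n) (Fin r) ℚ :=
  M.submatrix id (Fin.castLE hrn)

/-- The `r × m` submatrix on the first `r` rows of an `n × m` matrix. -/
def firstRows {n r m : ℕ} (hrn : r ≤ n) (A : Matrix (Fin n) (Fin m) ℚ) :
    Matrix (Fin r) (Fin m) ℚ :=
  A.submatrix (Fin.castLE hrn) id

/-!
Since `rank (A * Aᵀ) = rank A` over an ordered field, `A` has rank `r`; its first `r` rows `A'` have
rank `r` too, because `A' * A'ᵀ = M'` is invertible. So they span the row space of `A`, i.e.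
`A = C * A'` for some `C`, and then `N = A * A'ᵀ = C * M'` forces `C = N * M'⁻¹`.
-/

namespace Matrix

variable {K : Type*} [Field K] {m n r : Type*} [Fintype m] [Fintype n] [Fintype r]

theorem exists_eq_mul_submatrix_of_rank_le (A : Matrix m n K) (e : r → m)
    (h : A.rank ≤ (A.submatrix e id).rank) : ∃ C : Matrix m r K, A = C * A.submatrix e id := by
  have hspan :
      Submodule.span K (Set.range (A.submatrix e id).row) = Submodule.span K (Set.range A.row) :=
    Submodule.eq_of_le_of_finrank_le
      (Submodule.span_mono (Set.range_comp_subset_range e A.row))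
      (by rwa [← rank_eq_finrank_span_row, ← rank_eq_finrank_span_row])
  have hrow (i : m) : ∃ c : r → K, c ᵥ* A.submatrix e id = A i := by
    have : A.row i ∈ LinearMap.range (A.submatrix e id).vecMulLinear := by
      rw [range_vecMulLinear, hspan]
      exact Submodule.subset_span ⟨i, rfl⟩
    exact this
  choose C hC using hrow
  exact ⟨of C, by ext i j; exact (congrFun (hC i) j).symm⟩

theorem eq_mul_transpose_mul_inv_mul_submatrix [DecidableEq r] (A : Matrix m n K) (e : r → m)
    (hunit : IsUnit (A.submatrix e id * (A.submatrix e id)ᵀ)) (hrank : A.rank ≤ Fintype.card r) :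
    A = A * (A.submatrix e id)ᵀ * (A.submatrix e id * (A.submatrix e id)ᵀ)⁻¹ * A.submatrix e id := by
  set B := A.submatrix e id
  have hB : Fintype.card r ≤ B.rank := calc
    Fintype.card r = (B * Bᵀ).rank := (rank_of_isUnit _ hunit).symm
    _ ≤ B.rank := rank_mul_le_left _ _
  obtain ⟨C, hC⟩ := exists_eq_mul_submatrix_of_rank_le A e (hrank.trans hB)
  have hdet : IsUnit (B * Bᵀ).det := (isUnit_iff_isUnit_det _).1 hunit
  conv_rhs => rw [hC, Matrix.mul_assoc C, mul_nonsing_inv_cancel_right _ _ hdet]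
  exact hC

end Matrix

theorem topLeft_mul_transpose {n r m : ℕ} (hrn : r ≤ n) (A : Matrix (Fin n) (Fin m) ℚ) :
    topLeft hrn (A * Aᵀ) = firstRows hrn A * (firstRows hrn A)ᵀ := rfl

theorem eq_firstCols_mul_inv_mul_firstRows {n r m : ℕ} (hrn : r ≤ n) (A : Matrix (Fin n) (Fin m) ℚ)
    (hrank : (A * Aᵀ).rank = r) (hunit : IsUnit (topLeft hrn (A * Aᵀ))) :
    A = firstCols hrn (A * Aᵀ) * (topLeft hrn (A * Aᵀ))⁻¹ * firstRows hrn A := by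
  rw [rank_self_mul_transpose] at hrank
  exact A.eq_mul_transpose_mul_inv_mul_submatrix (Fin.castLE hrn) hunit (by simp [hrank])

theorem decomposition_determined_by_first_rows_general {n r m : ℕ} (hrn : r ≤ n)
    (M : Matrix (Fin n) (Fin n) ℚ) (hrank : M.rank = r)
    (hM' : IsUnit (topLeft hrn M))
    (A : Matrix (Fin n) (Fin m) ℚ) (hA : M = A * Aᵀ) :
    topLeft hrn M = firstRows hrn A * (firstRows hrn A)ᵀ ∧
    A = (firstCols hrn M * (topLeft hrn M)⁻¹) * firstRows hrn A ∧
    ∀ A₂ : Matrix (Fin n) (Fin m) ℚ, M = A₂ * A₂ᵀ →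
      firstRows hrn A₂ = firstRows hrn A → A₂ = A := by
  subst hA
  have hA := eq_firstCols_mul_inv_mul_firstRows hrn A hrank hM'
  refine ⟨topLeft_mul_transpose hrn A, hA, fun A₂ hA₂ hrows => ?_⟩
  rw [hA₂] at hrank hM'
  rw [eq_firstCols_mul_inv_mul_firstRows hrn A₂ hrank hM', hrows, ← hA₂, ← hA]

theorem decomposition_determined_by_first_rows {n r m : ℕ} (hrn : r ≤ n)
    (M : Matrix (Fin n) (Fin n) ℚ) (hsym : M.IsSymm) (hrank : M.rank = r)
    (hM' : IsUnit (topLeft hrn M))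
    (A : Matrix (Fin n) (Fin m) ℚ) (hA : M = A * Aᵀ) :
    topLeft hrn M = firstRows hrn A * (firstRows hrn A)ᵀ ∧
    A = (firstCols hrn M * (topLeft hrn M)⁻¹) * firstRows hrn A ∧
    ∀ A₂ : Matrix (Fin n) (Fin m) ℚ, M = A₂ * A₂ᵀ →
      firstRows hrn A₂ = firstRows hrn A → A₂ = A :=
  decomposition_determined_by_first_rows_general hrn M hrank hM' A hA
end

section
/- Let M be a symmetric n×n matrix over ℚ of rank r whose top-left r×r submatrix M' is invertible, and set R := N * M'⁻¹, where N is the n×r matrix consisting of the first r columns of M. Then the map sending an n×m matrix A to the r×m matrix A' consisting of its first r rows is a bijection from the set of n×m matrices A over ℚ with nonnegative integer entries satisfying M = A * Aᵀ, onto the set of r×m matrices A' over ℚ with nonnegative integer entries satisfying M' = A' * A'ᵀ and such that every entry of R * A' is a nonnegative integer; the inverse map is A' ↦ R * A'. -/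
open Matrix

/-- A rational matrix has nonnegative integer entries if each entry is the image of
a natural number in `ℚ`. -/
def NatEntries {a b : Type*} (X : Matrix a b ℚ) : Prop :=
  ∀ i j, ∃ k : ℕ, X i j = (k : ℚ)

/-!
Since `M` has rank `r` and its top-left block `M'` is invertible, the first `r` columns `N`
of `M` span its column space, which yields the factorization `M = N M'⁻¹ Nᵀ`.
If `M = A Aᵀ` and `A'` is the top part of `A`, then `A A'ᵀ = N` and `A' A'ᵀ = M'`, so
`A` and `Y := N M'⁻¹ A'` satisfy `A Aᵀ = A Yᵀ = Y Yᵀ = M`; hence `(A - Y)(A - Y)ᵀ = 0`,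
which over an ordered field forces `A = Y`. Conversely, `Y Yᵀ = N M'⁻¹ Nᵀ = M` whenever
`A' A'ᵀ = M'`, and the top part of `Y` is `M' M'⁻¹ A' = A'`.
-/

variable {K : Type*} [Field K] {m n k ι : Type*}

namespace Matrix

theorem exists_mul_eq_of_range_mulVecLin_le {R : Type*} [CommSemiring R] [Fintype ι]
    [Fintype n] [DecidableEq n] {C : Matrix m ι R} {M : Matrix m n R}
    (h : LinearMap.range M.mulVecLin ≤ LinearMap.range C.mulVecLin) :
    ∃ X : Matrix ι n R, C * X = M := by
  have hcol (j : n) : ∃ x, C *ᵥ x = M.col j := h ⟨Pi.single j 1, mulVec_single_one M j⟩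
  choose x hx using hcol
  exact ⟨(of x)ᵀ, ext fun i j => congrFun (hx j) i⟩

theorem range_mulVecLin_submatrix_id_eq_of_rank_eq [Fintype ι] [DecidableEq ι] [Fintype n]
    (M : Matrix m n K) (e : ι → m) (f : ι → n) (hM' : IsUnit (M.submatrix e f))
    (hrank : M.rank = Fintype.card ι) :
    LinearMap.range (M.submatrix id f).mulVecLin = LinearMap.range M.mulVecLin := by
  have hle : LinearMap.range (M.submatrix id f).mulVecLin ≤ LinearMap.range M.mulVecLin := by
    rw [range_mulVecLin, range_mulVecLin]
    exact Submodule.span_mono (Set.range_subset_iff.2 fun i => ⟨f i, rfl⟩)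
  have hrank' : (M.submatrix id f).rank = Fintype.card ι :=
    le_antisymm (by simpa using (M.submatrix id f).rank_le_card_width)
      (rank_of_isUnit _ hM' ▸ rank_submatrix_le (M.submatrix id f) e id)
  exact Submodule.eq_of_le_of_finrank_eq hle (hrank'.trans hrank.symm)

theorem eq_submatrix_mul_inv_mul_submatrix_of_rank_eq [Fintype ι] [DecidableEq ι] [Fintype n]
    [DecidableEq n] (M : Matrix m n K) (e : ι → m) (f : ι → n) (hM' : IsUnit (M.submatrix e f))
    (hrank : M.rank = Fintype.card ι) :
    M = M.submatrix id f * (M.submatrix e f)⁻¹ * M.submatrix e id := by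
  obtain ⟨X, hX⟩ := exists_mul_eq_of_range_mulVecLin_le
    (range_mulVecLin_submatrix_id_eq_of_rank_eq M e f hM' hrank).ge
  have hrows : M.submatrix e id = M.submatrix e f * X := by
    conv_lhs => rw [← hX]
    exact submatrix_mul _ _ e id id Function.bijective_id
  rw [hrows, Matrix.mul_assoc, nonsing_inv_mul_cancel_left _ _ ((isUnit_iff_isUnit_det _).1 hM'),
    hX]

theorem IsSymm.eq_submatrix_mul_inv_mul_transpose_of_rank_eq [Fintype ι] [DecidableEq ι]
    [Fintype n] [DecidableEq n] {M : Matrix n n K} (hsym : M.IsSymm) (e : ι → n)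
    (hM' : IsUnit (M.submatrix e e)) (hrank : M.rank = Fintype.card ι) :
    M = M.submatrix id e * (M.submatrix e e)⁻¹ * (M.submatrix id e)ᵀ := by
  rw [transpose_submatrix, hsym.eq]
  exact eq_submatrix_mul_inv_mul_submatrix_of_rank_eq M e e hM' hrank

theorem submatrix_mul_transpose {R l o : Type*} [CommSemiring R] [Fintype k]
    (A : Matrix m k R) (B : Matrix n k R) (e : l → m) (f : o → n) :
    (A * Bᵀ).submatrix e f = A.submatrix e id * (B.submatrix f id)ᵀ :=
  submatrix_mul _ _ e id f Function.bijective_id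

theorem submatrix_id_mul_nonsing_inv_mul [Fintype ι] [DecidableEq ι] [Fintype n]
    (M : Matrix m n K) (e : ι → m) (f : ι → n) (hM' : IsUnit (M.submatrix e f))
    (B : Matrix ι k K) : (M.submatrix id f * (M.submatrix e f)⁻¹ * B).submatrix e id = B := by
  rw [submatrix_mul _ _ e id id Function.bijective_id,
    submatrix_mul _ _ e id id Function.bijective_id, submatrix_id_id, submatrix_id_id,
    submatrix_submatrix, Function.id_comp, Function.comp_id,
    mul_nonsing_inv _ ((isUnit_iff_isUnit_det _).1 hM'), Matrix.one_mul]

theorem isSymm_mul_transpose {R : Type*} [CommSemiring R] [Fintype k] (A : Matrix m k R) :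
    (A * Aᵀ).IsSymm := by
  rw [IsSymm, transpose_mul, transpose_transpose]

theorem mul_inv_mul_mul_transpose_self [Fintype k] [Fintype ι] [DecidableEq ι]
    (C : Matrix m ι K) (A : Matrix ι k K) (hA : IsUnit (A * Aᵀ)) :
    (C * (A * Aᵀ)⁻¹ * A) * (C * (A * Aᵀ)⁻¹ * A)ᵀ = C * (A * Aᵀ)⁻¹ * Cᵀ := by
  have hdet := (isUnit_iff_isUnit_det _).1 hA
  rw [transpose_mul, transpose_mul, (isSymm_mul_transpose A).inv.eq]
  simp only [Matrix.mul_assoc]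
  rw [← Matrix.mul_assoc A, mul_nonsing_inv_cancel_left _ _ hdet]

section Ordered

variable {R : Type*} [CommRing R] [LinearOrder R] [IsStrictOrderedRing R] [Fintype k]

theorem eq_zero_of_mul_transpose_self_eq_zero {B : Matrix m k R} (h : B * Bᵀ = 0) : B = 0 :=
  funext fun i => dotProduct_self_eq_zero.1 (congrFun (congrFun h i) i)

theorem eq_of_mul_transpose_eq_self_mul_transpose {X Y : Matrix m k R}
    (hXY : X * Yᵀ = X * Xᵀ) (hYY : Y * Yᵀ = X * Xᵀ) : X = Y := by
  have hYX : Y * Xᵀ = X * Xᵀ := by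
    rw [← transpose_transpose Y, ← transpose_mul, hXY, transpose_mul, transpose_transpose]
  refine sub_eq_zero.1 (eq_zero_of_mul_transpose_self_eq_zero ?_)
  rw [transpose_sub, Matrix.sub_mul, Matrix.mul_sub, Matrix.mul_sub, hXY, hYX, hYY]
  abel

end Ordered

theorem eq_submatrix_mul_inv_mul_submatrix_of_eq_mul_transpose [LinearOrder K]
    [IsStrictOrderedRing K] [Fintype ι] [DecidableEq ι] [Fintype k] {M : Matrix m m K}
    {A : Matrix m k K} (hA : M = A * Aᵀ) (e : ι → m) (hM' : IsUnit (M.submatrix e e))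
    (hfact : M = M.submatrix id e * (M.submatrix e e)⁻¹ * (M.submatrix id e)ᵀ) :
    A = M.submatrix id e * (M.submatrix e e)⁻¹ * A.submatrix e id := by
  subst hA
  rw [submatrix_mul_transpose A A e e] at hM' hfact ⊢
  rw [submatrix_mul_transpose A A id e, submatrix_id_id] at hfact ⊢
  refine eq_of_mul_transpose_eq_self_mul_transpose ?_ ?_
  · rw [transpose_mul, transpose_mul, (isSymm_mul_transpose _).inv.eq]
    simp only [← Matrix.mul_assoc]
    exact hfact.symm
  · rw [mul_inv_mul_mul_transpose_self _ _ hM']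
    exact hfact.symm

end Matrix

theorem decompositions_biject {n r m : ℕ} (hrn : r ≤ n)
    (M : Matrix (Fin n) (Fin n) ℚ) (hsym : M.IsSymm) (hrank : M.rank = r)
    (hM' : IsUnit (topLeft hrn M)) :
    Set.BijOn (fun A : Matrix (Fin n) (Fin m) ℚ => firstRows hrn A)
      {A : Matrix (Fin n) (Fin m) ℚ | NatEntries A ∧ M = A * Aᵀ}
      {A' : Matrix (Fin r) (Fin m) ℚ | NatEntries A' ∧ topLeft hrn M = A' * A'ᵀ ∧
        NatEntries (firstCols hrn M * (topLeft hrn M)⁻¹ * A')} ∧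
    Set.InvOn (fun A' : Matrix (Fin r) (Fin m) ℚ => firstCols hrn M * (topLeft hrn M)⁻¹ * A')
      (fun A : Matrix (Fin n) (Fin m) ℚ => firstRows hrn A)
      {A : Matrix (Fin n) (Fin m) ℚ | NatEntries A ∧ M = A * Aᵀ}
      {A' : Matrix (Fin r) (Fin m) ℚ | NatEntries A' ∧ topLeft hrn M = A' * A'ᵀ ∧
        NatEntries (firstCols hrn M * (topLeft hrn M)⁻¹ * A')} := by
  have hfact : M = firstCols hrn M * (topLeft hrn M)⁻¹ * (firstCols hrn M)ᵀ :=
    hsym.eq_submatrix_mul_inv_mul_transpose_of_rank_eq _ hM' (by rwa [Fintype.card_fin])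
  set S := {A : Matrix (Fin n) (Fin m) ℚ | NatEntries A ∧ M = A * Aᵀ}
  set T := {A' : Matrix (Fin r) (Fin m) ℚ | NatEntries A' ∧ topLeft hrn M = A' * A'ᵀ ∧
    NatEntries (firstCols hrn M * (topLeft hrn M)⁻¹ * A')}
  have hinv : Set.InvOn (firstCols hrn M * (topLeft hrn M)⁻¹ * ·) (firstRows hrn) S T :=
    ⟨fun A hA => (eq_submatrix_mul_inv_mul_submatrix_of_eq_mul_transpose hA.2 _ hM' hfact).symm,
      fun A' _ => submatrix_id_mul_nonsing_inv_mul M _ _ hM' A'⟩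
  refine ⟨hinv.bijOn ?_ ?_, hinv⟩
  · rintro A ⟨hnat, hA⟩
    have hrec : firstCols hrn M * (topLeft hrn M)⁻¹ * firstRows hrn A = A :=
      hinv.1 ⟨hnat, hA⟩
    exact ⟨fun i j => hnat _ _, hA ▸ submatrix_mul_transpose A A _ _, hrec.symm ▸ hnat⟩
  · rintro A' ⟨-, hA', hnat⟩
    have hgram := mul_inv_mul_mul_transpose_self (firstCols hrn M) A' (hA' ▸ hM')
    rw [← hA'] at hgram
    exact ⟨hnat, hfact.trans hgram.symm⟩
end
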